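/- Let G be a finite group and x ∈ G with x ∉ Sol(G). Then deg(x), the number of elements y ∈ G such that ⟨x,y⟩ is not solvable, is not a prime number. -/

import Mathlib

/-!
The set `S` of all `y` with `⟨x, y⟩` non-solvable is a union of double cosets of `⟨x⟩`, since
multiplying `y` on either side by a power of `x` does not change `⟨x, y⟩`. Hence `|⟨x⟩|` divides
`|S|`. If `|S|` were prime, either `x = 1`, or `S` would be a single left coset `t⟨x⟩` which is
also stable under left multiplication by `⟨x⟩`, so that `t` normalizes `⟨x⟩`. In both cases every
`t ∈ S` normalizes `⟨x⟩`, so `⟨x, t⟩` is cyclic-by-cyclic, hence solvable: a contradiction.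
-/

open Subgroup Pointwise

section

variable {G : Type*} [Group G]

lemma closure_pair_mul_zpow_right (x y : G) (k : ℤ) :
    closure ({x, y * x ^ k} : Set G) = closure {x, y} := by
  have hx : x ∈ closure ({x, y} : Set G) := subset_closure (by simp)
  have hx' : x ∈ closure ({x, y * x ^ k} : Set G) := subset_closure (by simp)
  apply le_antisymm <;> rw [closure_le, Set.insert_subset_iff, Set.singleton_subset_iff]
  · exact ⟨hx, mul_mem (subset_closure (by simp)) (zpow_mem hx k)⟩
  · refine ⟨hx', ?_⟩
    simpa using mul_mem (subset_closure (by simp) : y * x ^ k ∈ _) (zpow_mem hx' (-k))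

lemma closure_pair_zpow_mul_left (x y : G) (k : ℤ) :
    closure ({x, x ^ k * y} : Set G) = closure {x, y} := by
  have hx : x ∈ closure ({x, y} : Set G) := subset_closure (by simp)
  have hx' : x ∈ closure ({x, x ^ k * y} : Set G) := subset_closure (by simp)
  apply le_antisymm <;> rw [closure_le, Set.insert_subset_iff, Set.singleton_subset_iff]
  · exact ⟨hx, mul_mem (zpow_mem hx k) (subset_closure (by simp))⟩
  · refine ⟨hx', ?_⟩
    simpa using mul_mem (zpow_mem hx' (-k)) (subset_closure (by simp) : x ^ k * y ∈ _)

def nonSolvableNeighbors (x : G) : Set G :=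
  {y | ¬ Group.IsSolvable (closure ({x, y} : Set G))}

lemma mul_mem_nonSolvableNeighbors_right (x : G) :
    ∀ y ∈ nonSolvableNeighbors x, ∀ h ∈ zpowers x, y * h ∈ nonSolvableNeighbors x := by
  rintro y hy _ ⟨k, rfl⟩
  change ¬ Group.IsSolvable (closure ({x, y * x ^ k} : Set G))
  rwa [closure_pair_mul_zpow_right]

lemma mul_mem_nonSolvableNeighbors_left (x : G) :
    ∀ y ∈ nonSolvableNeighbors x, ∀ h ∈ zpowers x, h * y ∈ nonSolvableNeighbors x := by
  rintro y hy _ ⟨k, rfl⟩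
  change ¬ Group.IsSolvable (closure ({x, x ^ k * y} : Set G))
  rwa [closure_pair_zpow_mul_left]

lemma Subgroup.card_dvd_card_of_mul_mem {H : Subgroup G} {s : Set G}
    (hs : ∀ y ∈ s, ∀ h ∈ H, y * h ∈ s) : Nat.card H ∣ Nat.card s := by
  have hpre : QuotientGroup.mk ⁻¹' (QuotientGroup.mk '' s : Set (G ⧸ H)) = s := by
    refine (Set.subset_preimage_image _ _).antisymm' ?_
    rintro g ⟨t, ht, htg⟩
    simpa using hs t ht _ (QuotientGroup.eq.mp htg)
  rw [← hpre, Nat.card_congr (QuotientGroup.preimageMkEquivSubgroupProdSet H _), Nat.card_prod]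
  exact dvd_mul_right _ _

lemma Subgroup.eq_leftCoset_of_card_eq {H : Subgroup G} [Finite H] {s : Set G}
    (hs : ∀ y ∈ s, ∀ h ∈ H, y * h ∈ s) (hcard : Nat.card s = Nat.card H) {t : G} (ht : t ∈ s) :
    s = t • (H : Set G) := by
  have hsub : t • (H : Set G) ⊆ s := by
    rintro _ ⟨h, hh, rfl⟩
    exact hs t ht h hh
  have hfin : s.Finite := Set.finite_of_ncard_pos (by
    rw [← Nat.card_coe_set_eq, hcard]; exact Nat.card_pos)
  refine (Set.eq_of_subset_of_ncard_le hsub ?_ hfin).symm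
  rw [Set.ncard_smul_set, ← Nat.card_coe_set_eq, hcard]
  rfl

lemma Subgroup.mem_normalizer_of_card_eq {H : Subgroup G} [Finite H] {s : Set G}
    (hright : ∀ y ∈ s, ∀ h ∈ H, y * h ∈ s) (hleft : ∀ y ∈ s, ∀ h ∈ H, h * y ∈ s)
    (hcard : Nat.card s = Nat.card H) {t : G} (ht : t ∈ s) : t ∈ normalizer (H : Set G) := by
  have hcoset := eq_leftCoset_of_card_eq hright hcard ht
  have hinv : t⁻¹ ∈ normalizer (H : Set G) := mem_normalizer_fintype fun h hh => by
    have := hcoset ▸ hleft t ht h hh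
    rw [mem_leftCoset_iff] at this
    simpa [mul_assoc] using this
  simpa using inv_mem hinv

lemma isCyclic_closure_pair_quotient {x : G} (t : G) {H : Subgroup G} (hx : x ∈ H)
    [(H.subgroupOf (closure {x, t})).Normal] :
    IsCyclic (closure ({x, t} : Set G) ⧸ H.subgroupOf (closure {x, t})) := by
  set K := closure ({x, t} : Set G)
  set N := H.subgroupOf K
  set τ : K ⧸ N := QuotientGroup.mk ⟨t, subset_closure (by simp)⟩
  have hgen : (zpowers τ).comap (QuotientGroup.mk' N) = ⊤ := by
    rw [eq_top_iff, ← closure_closure_coe_preimage, closure_le]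
    rintro ⟨y, hyK⟩ (rfl | rfl : y = x ∨ y = t)
    · have hy1 : QuotientGroup.mk' N ⟨y, hyK⟩ = 1 :=
        (QuotientGroup.eq_one_iff _).mpr (mem_subgroupOf.mpr hx)
      rw [SetLike.mem_coe, mem_comap, hy1]
      exact one_mem _
    · exact mem_zpowers τ
  refine ⟨τ, fun q => ?_⟩
  obtain ⟨g, rfl⟩ := QuotientGroup.mk_surjective q
  exact (eq_top_iff' _).mp hgen g

lemma isSolvable_closure_pair_of_mem_normalizer {x t : G}
    (ht : t ∈ normalizer (zpowers x : Set G)) : Group.IsSolvable (closure ({x, t} : Set G)) := by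
  set K := closure ({x, t} : Set G)
  have hle : zpowers x ≤ K := zpowers_le.mpr (subset_closure (by simp))
  have hK : K ≤ normalizer (zpowers x : Set G) := by
    rw [closure_le, Set.insert_subset_iff, Set.singleton_subset_iff]
    exact ⟨le_normalizer (mem_zpowers x), ht⟩
  have : ((zpowers x).subgroupOf K).Normal := (normal_subgroupOf_iff_le_normalizer hle).mpr hK
  have hN : Group.IsSolvable ((zpowers x).subgroupOf K) :=
    have : Group.IsSolvable (zpowers x) := Group.isSolvable_of_comm mul_comm'
    Group.isSolvable_of_surjective (f := (subgroupOfEquivOfLe hle).symm.toMonoidHom)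
      (subgroupOfEquivOfLe hle).symm.surjective
  have := isCyclic_closure_pair_quotient t (mem_zpowers x)
  have hQ : Group.IsSolvable (K ⧸ (zpowers x).subgroupOf K) := Group.isSolvable_of_comm mul_comm'
  exact (Group.isSolvable_iff_subgroup_quotient _).mpr ⟨hN, hQ⟩

end

/-- Let `G` be a finite group and `x ∉ Sol(G)`. Then `deg(x)`, the number of
`y ∈ G` with `⟨x, y⟩` not solvable, is not a prime number. -/
theorem degree_not_prime (G : Type*) [Group G] [Finite G] (x : G)
    (hx : ¬ (∀ z : G, IsSolvable ↥(Subgroup.closure ({x, z} : Set G)))) :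
    ¬ Nat.Prime
      (Nat.card {y : G | ¬ IsSolvable ↥(Subgroup.closure ({x, y} : Set G))}) := by
  change ¬ (Nat.card (nonSolvableNeighbors x)).Prime
  intro hp
  obtain ⟨t, ht⟩ : ∃ t, t ∈ nonSolvableNeighbors x := not_forall.mp hx
  have hright := mul_mem_nonSolvableNeighbors_right x
  have hnorm : t ∈ normalizer (zpowers x : Set G) := by
    rcases hp.eq_one_or_self_of_dvd _ (card_dvd_card_of_mul_mem hright) with hone | hcard
    · rw [eq_bot_of_card_eq _ hone, normalizer_eq_top]
      exact mem_top t
    · exact mem_normalizer_of_card_eq hright (mul_mem_nonSolvableNeighbors_left x) hcard.symm ht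
  exact ht (isSolvable_closure_pair_of_mem_normalizer hnorm)
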